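/- arXiv:2509.11494 — 3 statements merged into one kernel-verified Lean document; each statement's English description precedes it below -/
import Mathlib

section
/- For all n ≥ 0: the number of Jacobi permutations of [2n] avoiding 213 equals (1/(2n+1))·C(3n, n), and this also equals the number of Jacobi permutations of [2n] avoiding 312; similarly, the number of Jacobi permutations of [2n+1] avoiding 213 equals (1/(2n+1))·C(3n+1, n+1), and this also equals the number of Jacobi permutations of [2n+1] avoiding 312. -/
/-- The length of `ρ_π(π_k)`: the maximal consecutive subword of `π` immediately to the
right of position `k`, all of whose letters are larger than `π_k`.  Letters of a
permutation of `[n] = {1,…,n}` are modelled by `(π i : ℕ) + 1` for `π : Equiv.Perm (Fin n)`. -/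
noncomputable def rhoLen {n : ℕ} (π : Equiv.Perm (Fin n)) (k : Fin n) : ℕ :=
  Nat.card {j : Fin n // k < j ∧ ∀ i : Fin n, k < i → i ≤ j → π k < π i}

/-- A permutation is Jacobi if `ρ_π(π_k)` has even length for every position `k`. -/
def IsJacobi {n : ℕ} (π : Equiv.Perm (Fin n)) : Prop :=
  ∀ k : Fin n, Even (rhoLen π k)

/-- `π` avoids the pattern `123`. -/
def Avoids123 {n : ℕ} (π : Equiv.Perm (Fin n)) : Prop :=
  ¬ ∃ i j k : Fin n, i < j ∧ j < k ∧ π i < π j ∧ π j < π k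

/-- `π` avoids the pattern `132`. -/
def Avoids132 {n : ℕ} (π : Equiv.Perm (Fin n)) : Prop :=
  ¬ ∃ i j k : Fin n, i < j ∧ j < k ∧ π i < π k ∧ π k < π j

/-- `π` avoids the pattern `213`. -/
def Avoids213 {n : ℕ} (π : Equiv.Perm (Fin n)) : Prop :=
  ¬ ∃ i j k : Fin n, i < j ∧ j < k ∧ π j < π i ∧ π i < π k

/-- `π` avoids the pattern `231`. -/
def Avoids231 {n : ℕ} (π : Equiv.Perm (Fin n)) : Prop :=
  ¬ ∃ i j k : Fin n, i < j ∧ j < k ∧ π k < π i ∧ π i < π j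

/-- `π` avoids the pattern `312`. -/
def Avoids312 {n : ℕ} (π : Equiv.Perm (Fin n)) : Prop :=
  ¬ ∃ i j k : Fin n, i < j ∧ j < k ∧ π j < π k ∧ π k < π i

/-- `π` avoids the pattern `321`. -/
def Avoids321 {n : ℕ} (π : Equiv.Perm (Fin n)) : Prop :=
  ¬ ∃ i j k : Fin n, i < j ∧ j < k ∧ π k < π j ∧ π j < π i

/-!
Split a 312- or 213-avoiding permutation at its smallest letter: `π = σ 1 τ`. In both patterns
the middle letter is the smallest, so the `1`, a letter of `σ` and a letter of `τ` would form an
occurrence unless all letters of `σ` lie below (312) resp. above (213) all letters of `τ`. Hence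
`π` is determined by the standardizations of `σ` and `τ`, which again avoid the pattern, and
every such pair glues back. All letters after the `1` exceed it, so `ρ_π(1) = τ`, while every
other run stays inside `σ` (it stops at the `1`) or inside `τ`; thus `π` is Jacobi iff `σ` and `τ`
are and `|τ|` is even. The numbers `c(N)` therefore satisfy `c(N + 1) = ∑_{q even} c(N - q) c(q)`,
i.e. `O = E²` and `E = 1 + x O E` for `E = ∑ c(2n) xⁿ`, `O = ∑ c(2n + 1) xⁿ`. So `E = B` and
`O = B²` for the ternary-tree series `B = 1 + x B³`, whose powers have the Raney numbers as
coefficients.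
-/

open Finset Equiv

/-- The coefficient of `xⁿ` in `Bᵖ` for `B = 1 + x B³`; the first branch is `B⁰ = 1`. -/
noncomputable def raney (n p : ℕ) : ℚ :=
  if p = 0 then (if n = 0 then 1 else 0)
  else (p : ℚ) / (3 * n + p) * ((3 * n + p).choose n : ℕ)

lemma raney_of_ne_zero (n : ℕ) {p : ℕ} (hp : p ≠ 0) :
    raney n p = (p : ℚ) / (3 * n + p) * ((3 * n + p).choose n : ℕ) := by
  simp [raney, hp]

@[simp] lemma raney_zero_left (p : ℕ) : raney 0 p = 1 := by
  rcases eq_or_ne p 0 with rfl | hp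
  · simp [raney]
  · have : (p : ℚ) ≠ 0 := by exact_mod_cast hp
    simp [raney_of_ne_zero 0 hp, this]

@[simp] lemma raney_succ_zero (n : ℕ) : raney (n + 1) 0 = 0 := by simp [raney]

lemma cast_choose_succ_right_mul (m k : ℕ) (h : k ≤ m) :
    (m.choose (k + 1) : ℚ) * (k + 1) = m.choose k * ((m : ℚ) - k) := by
  rw [← Nat.cast_sub h]
  exact_mod_cast Nat.choose_succ_right_eq m k

lemma raney_succ_one (n : ℕ) : raney (n + 1) 1 = raney n 3 := by
  rw [raney_of_ne_zero _ one_ne_zero, raney_of_ne_zero _ (by norm_num)]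
  have h : ((3 * n + 3 : ℕ) + 1 : ℚ) * (3 * n + 3).choose n
      = (3 * n + 4).choose (n + 1) * (n + 1) := by
    exact_mod_cast Nat.add_one_mul_choose_eq (3 * n + 3) n
  push_cast at h ⊢
  rw [show 3 * (n + 1) + 1 = 3 * n + 4 by ring]
  field_simp
  linear_combination -h

lemma raney_succ_succ (n p : ℕ) : raney (n + 1) (p + 1) = raney (n + 1) p + raney n (p + 3) := by
  rcases p with _ | p
  · simp [raney_succ_one]
  rw [raney_of_ne_zero _ (by omega), raney_of_ne_zero _ (by omega), raney_of_ne_zero _ (by omega),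
    show 3 * (n + 1) + (p + 1 + 1) = 3 * n + p + 4 + 1 by ring,
    show 3 * (n + 1) + (p + 1) = 3 * n + p + 4 by ring,
    show 3 * n + (p + 1 + 3) = 3 * n + p + 4 by ring, Nat.choose_succ_succ' (3 * n + p + 4) n]
  have h := cast_choose_succ_right_mul (3 * n + p + 4) n (by omega)
  push_cast at h ⊢
  have : (3 * n + p + 5 : ℚ) ≠ 0 := by positivity
  have : (3 * n + p + 4 : ℚ) ≠ 0 := by positivity
  field_simp
  linear_combination (9 * (n : ℚ) + 3 * p + 12) * h

lemma sum_range_raney_mul_raney (n : ℕ) :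
    ∀ p r, ∑ i ∈ range (n + 1), raney i p * raney (n - i) r = raney n (p + r) := by
  induction n using Nat.strong_induction_on with
  | _ n ih =>
  rcases n with _ | m
  · simp
  intro p r
  induction p with
  | zero =>
    rw [sum_eq_single_of_mem 0 (by simp) fun i _ hi => by
      obtain ⟨j, rfl⟩ := Nat.exists_eq_succ_of_ne_zero hi; simp]
    simp
  | succ p ihp =>
    have hsplit : ∀ i ∈ range (m + 1), raney (i + 1) (p + 1) * raney (m + 1 - (i + 1)) r
        = raney (i + 1) p * raney (m + 1 - (i + 1)) r + raney i (p + 3) * raney (m - i) r := by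
      intro i _
      rw [raney_succ_succ, Nat.add_sub_add_right]
      ring
    rw [sum_range_succ'] at ihp ⊢
    rw [sum_congr rfl hsplit, sum_add_distrib, ih m (by omega), show p + 1 + r = p + r + 1 by ring,
      raney_succ_succ, ← ihp, show p + 3 + r = p + r + 3 by ring]
    simp only [raney_zero_left]
    ring

lemma raney_one (n : ℕ) : raney n 1 = 1 / (2 * (n : ℚ) + 1) * ((3 * n).choose n : ℕ) := by
  rw [raney_of_ne_zero _ one_ne_zero]
  have h : ((3 * n).choose n : ℚ) * (3 * n + 1) = (3 * n + 1).choose n * (2 * n + 1) := by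
    rw [show (2 * n + 1 : ℚ) = ((3 * n + 1 - n : ℕ) : ℚ) by
      push_cast [show n ≤ 3 * n + 1 by omega]; ring]
    exact_mod_cast Nat.choose_mul_succ_eq (3 * n) n
  push_cast
  field_simp
  linear_combination -h

lemma raney_two (n : ℕ) :
    raney n 2 = 1 / (2 * (n : ℚ) + 1) * ((3 * n + 1).choose (n + 1) : ℕ) := by
  rw [raney_of_ne_zero _ two_ne_zero]
  have h1 : ((3 * n + 1).choose n : ℚ) * (3 * n + 2) = (3 * n + 2).choose n * (2 * n + 2) := by
    rw [show (2 * n + 2 : ℚ) = ((3 * n + 1 + 1 - n : ℕ) : ℚ) by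
      push_cast [show n ≤ 3 * n + 1 + 1 by omega]; ring]
    exact_mod_cast Nat.choose_mul_succ_eq (3 * n + 1) n
  have h2 := cast_choose_succ_right_mul (3 * n + 1) n (by omega)
  push_cast at h1 h2 ⊢
  have key : ((n : ℚ) + 1) * (2 * (3 * n + 2).choose n * (2 * n + 1))
      = ((n : ℚ) + 1) * ((3 * n + 2) * (3 * n + 1).choose (n + 1)) := by
    linear_combination (-(2 * (n : ℚ) + 1)) * h1 - (3 * (n : ℚ) + 2) * h2
  have := mul_left_cancel₀ (by positivity) key
  field_simp
  linear_combination this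

lemma sum_range_ite_even {M : Type*} [AddCommMonoid M] (N : ℕ) (f : ℕ → ℕ → M) :
    ∑ i ∈ range (N + 1), (if Even (N - i) then f i (N - i) else 0)
      = ∑ j ∈ range (N / 2 + 1), f (N - 2 * j) (2 * j) := by
  rw [← sum_filter]
  refine sum_bij' (fun i _ => (N - i) / 2) (fun j _ => N - 2 * j) ?_ ?_ ?_ ?_ ?_ <;>
    intro i hi <;> simp only [mem_filter, mem_range, Nat.even_iff] at hi ⊢
  any_goals omega
  rw [show N - 2 * ((N - i) / 2) = i by omega, show 2 * ((N - i) / 2) = N - i by omega]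

lemma cast_eq_raney_of_rec (c : ℕ → ℕ) (h0 : c 0 = 1)
    (hrec : ∀ N, c (N + 1) = ∑ j ∈ range (N / 2 + 1), c (N - 2 * j) * c (2 * j)) (N : ℕ) :
    (c N : ℚ) = raney (N / 2) (N % 2 + 1) := by
  induction N using Nat.strong_induction_on with
  | _ N ih =>
  rcases N with _ | M
  · simp [h0]
  have hterm : ∀ j ∈ range (M / 2 + 1),
      (c (M - 2 * j) * c (2 * j) : ℚ) = raney j 1 * raney (M / 2 - j) (M % 2 + 1) := by
    intro j hj
    rw [mem_range] at hj
    rw [ih _ (by omega), ih _ (by omega), mul_comm, show 2 * j / 2 = j by omega,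
      show 2 * j % 2 = 0 by omega, show (M - 2 * j) / 2 = M / 2 - j by omega,
      show (M - 2 * j) % 2 = M % 2 by omega]
  rw [hrec, Nat.cast_sum, sum_congr rfl fun j hj => by push_cast; exact hterm j hj,
    sum_range_raney_mul_raney]
  rcases Nat.mod_two_eq_zero_or_one M with h | h
  · rw [h, show (M + 1) / 2 = M / 2 by omega, show (M + 1) % 2 = 1 by omega]
  · rw [h, show (M + 1) / 2 = M / 2 + 1 by omega, show (M + 1) % 2 = 0 by omega, raney_succ_one]

section Permutations

variable {n : ℕ}

lemma val_apply_pos_of_ne (π : Perm (Fin n)) {k i : Fin n} (hk : (π k : ℕ) = 0) (hik : i ≠ k) :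
    0 < (π i : ℕ) := by
  have : (π i : ℕ) ≠ π k := Fin.val_injective.ne (π.injective.ne hik)
  omega

lemma rhoLen_of_val_eq_zero (π : Perm (Fin n)) {k : Fin n} (hk : (π k : ℕ) = 0) :
    rhoLen π k = n - 1 - k := by
  have hrun : ∀ j : Fin n, (k < j ∧ ∀ i : Fin n, k < i → i ≤ j → π k < π i) ↔ k < j :=
    fun j => ⟨And.left, fun hkj => ⟨hkj, fun i hki _ => by
      have := val_apply_pos_of_ne π hk hki.ne'
      rw [Fin.lt_def]
      omega⟩⟩
  rw [rhoLen, Nat.card_congr (subtypeEquivRight hrun), Nat.card_eq_fintype_card,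
    Fintype.card_subtype, filter_lt_eq_Ioi, Fin.card_Ioi]

lemma card_le_val_of_forall_lt (π : Perm (Fin n)) (v : Fin n) {S : Finset (Fin n)}
    (hS : ∀ x ∈ S, π x < π v) : #S ≤ π v := by
  have := card_le_card (s := S.map π.toEmbedding) (t := Iio (π v)) fun y hy => by
    obtain ⟨x, hx, rfl⟩ := mem_map.mp hy
    exact mem_Iio.mpr (hS x hx)
  rwa [card_map, Fin.card_Iio] at this

lemma val_add_card_lt_of_forall_lt (π : Perm (Fin n)) (v : Fin n) {S : Finset (Fin n)}
    (hS : ∀ x ∈ S, π v < π x) : π v + #S < n := by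
  have := card_le_card (s := S.map π.toEmbedding) (t := Ioi (π v)) fun y hy => by
    obtain ⟨x, hx, rfl⟩ := mem_map.mp hy
    exact mem_Ioi.mpr (hS x hx)
  rw [card_map, Fin.card_Ioi] at this
  have := (π v).isLt
  omega

def IsShiftedFactor {m : ℕ} (σ : Perm (Fin m)) (π : Perm (Fin n)) (c d : ℕ) : Prop :=
  ∀ (i : Fin m) (i' : Fin n), (i' : ℕ) = c + i → (π i' : ℕ) = σ i + d

lemma exists_isShiftedFactor (π : Perm (Fin n)) {m c d : ℕ} (hcm : c + m ≤ n)
    (hbd : ∀ i : Fin n, c ≤ i → i < c + m → d ≤ π i ∧ π i < d + m) :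
    ∃ σ : Perm (Fin m), IsShiftedFactor σ π c d := by
  have hbd' (i : Fin m) := hbd ⟨c + i, by omega⟩ (by simp) (by simp)
  let f (i : Fin m) : Fin m := ⟨π ⟨c + i, by omega⟩ - d, by have := hbd' i; omega⟩
  have hf : Function.Injective f := fun i j hij => by
    have hval := congrArg Fin.val hij
    have := hbd' i
    have := hbd' j
    simp only [f] at hval
    have := congrArg Fin.val (π.injective (Fin.ext (by omega : (π ⟨c + i, _⟩ : ℕ) = π ⟨c + j, _⟩)))
    simp only at this
    exact Fin.ext (by omega)
  refine ⟨ofBijective f hf.bijective_of_finite, fun i i' hi => ?_⟩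
  rw [show i' = ⟨c + i, by omega⟩ from Fin.ext hi]
  have := hbd' i
  simp only [ofBijective_apply, f]
  omega

lemma rhoLen_eq_of_isShiftedFactor {m c d : ℕ} {π : Perm (Fin n)} {σ : Perm (Fin m)}
    (hσ : IsShiftedFactor σ π c d) (hcm : c + m ≤ n)
    (hstop : ∀ i' : Fin n, (i' : ℕ) = c + m → (π i' : ℕ) < d)
    {k : Fin m} {k' : Fin n} (hk : (k' : ℕ) = c + k) : rhoLen π k' = rhoLen σ k := by
  have hπk := hσ k k' hk
  simp only [rhoLen, Fin.lt_def, Fin.le_def]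
  symm
  refine Nat.card_eq_of_bijective (fun j => ⟨⟨c + j.1, by omega⟩, ?_⟩) ⟨fun j l hjl => ?_, ?_⟩
  · obtain ⟨j, hkj, hrun⟩ := j
    refine ⟨by simp only; omega, fun i' hki' hi'j => ?_⟩
    simp only at hi'j
    have := hrun ⟨i' - c, by omega⟩ (by simp only; omega) (by simp only; omega)
    rw [hπk, hσ ⟨i' - c, by omega⟩ i' (by simp only; omega)]
    omega
  · exact Subtype.ext (Fin.ext (by simpa [Fin.ext_iff] using hjl))
  · rintro ⟨j', hkj', hrun⟩
    have hj' : (j' : ℕ) < c + m := by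
      by_contra! h
      have := hrun ⟨c + m, by omega⟩ (by simp only; omega) (by simp only; omega)
      have := hstop ⟨c + m, by omega⟩ rfl
      omega
    refine ⟨⟨⟨j' - c, by omega⟩, by simp only; omega, fun i hki hij => ?_⟩,
      by simp [Fin.ext_iff]; omega⟩
    simp only at hij
    have := hrun ⟨c + i, by omega⟩ (by simp only; omega) (by simp only; omega)
    rw [hπk, hσ i _ rfl] at this
    omega

def AvoidsRel (R : ℕ → ℕ → ℕ → Prop) (π : Perm (Fin n)) : Prop :=
  ¬ ∃ i j k : Fin n, i < j ∧ j < k ∧ R (π i) (π j) (π k)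

lemma AvoidsRel.of_isShiftedFactor {R : ℕ → ℕ → ℕ → Prop}
    (hR : ∀ d x y z, R (x + d) (y + d) (z + d) ↔ R x y z) {m c d : ℕ} {π : Perm (Fin n)}
    {σ : Perm (Fin m)} (hσ : IsShiftedFactor σ π c d) (hcm : c + m ≤ n) (hπ : AvoidsRel R π) :
    AvoidsRel R σ := by
  rintro ⟨i, j, k, hij, hjk, hijk⟩
  refine hπ ⟨⟨c + i, by omega⟩, ⟨c + j, by omega⟩, ⟨c + k, by omega⟩, ?_, ?_, ?_⟩
  · rw [Fin.lt_def] at hij ⊢; simp only; omega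
  · rw [Fin.lt_def] at hjk ⊢; simp only; omega
  · rwa [hσ i _ rfl, hσ j _ rfl, hσ k _ rfl, hR]

variable {π : Perm (Fin n)} {m : Fin n}

lemma Avoids312.lt_of_lt_of_lt (hπ : Avoids312 π) (hm : (π m : ℕ) = 0) {i k : Fin n}
    (hi : i < m) (hk : m < k) : π i < π k := by
  by_contra! h
  have := val_apply_pos_of_ne π hm hk.ne'
  exact hπ ⟨i, m, k, hi, hk, Fin.lt_def.mpr (by omega),
    lt_of_le_of_ne h (π.injective.ne (hi.trans hk).ne')⟩

lemma Avoids213.gt_of_lt_of_lt (hπ : Avoids213 π) (hm : (π m : ℕ) = 0) {i k : Fin n}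
    (hi : i < m) (hk : m < k) : π k < π i := by
  by_contra! h
  have := val_apply_pos_of_ne π hm hi.ne
  exact hπ ⟨i, m, k, hi, hk, Fin.lt_def.mpr (by omega),
    lt_of_le_of_ne h (π.injective.ne (hi.trans hk).ne)⟩

end Permutations

section Glue

variable {p q a b : ℕ}

/-- `π = (σ + a) 0 (τ + b)` as a word. -/
structure IsGlue (a b : ℕ) (σ : Perm (Fin p)) (τ : Perm (Fin q)) (π : Perm (Fin (p + 1 + q))) :
    Prop where
  left : IsShiftedFactor σ π 0 a
  mid : ∀ k : Fin (p + 1 + q), (k : ℕ) = p → (π k : ℕ) = 0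
  right : IsShiftedFactor τ π (p + 1) b

variable {σ : Perm (Fin p)} {τ : Perm (Fin q)} {π : Perm (Fin (p + 1 + q))}

lemma IsGlue.isJacobi_iff (hπ : IsGlue a b σ τ π) (ha : 1 ≤ a) :
    IsJacobi π ↔ IsJacobi σ ∧ IsJacobi τ ∧ Even q := by
  have hL (i : Fin p) (i' : Fin (p + 1 + q)) (h : (i' : ℕ) = i) : rhoLen π i' = rhoLen σ i :=
    rhoLen_eq_of_isShiftedFactor hπ.left (by omega)
      (fun j hj => by rw [hπ.mid j (by omega)]; omega) (by omega)
  have hM (k : Fin (p + 1 + q)) (h : (k : ℕ) = p) : rhoLen π k = q := by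
    rw [rhoLen_of_val_eq_zero π (hπ.mid k h)]
    omega
  have hR (j : Fin q) (j' : Fin (p + 1 + q)) (h : (j' : ℕ) = p + 1 + j) :
      rhoLen π j' = rhoLen τ j :=
    rhoLen_eq_of_isShiftedFactor hπ.right le_rfl (fun j' hj => absurd j'.isLt (by omega)) h
  constructor
  · intro hJ
    exact ⟨fun i => hL i ⟨i, by omega⟩ rfl ▸ hJ _,
      fun j => hR j ⟨p + 1 + j, by omega⟩ rfl ▸ hJ _, hM ⟨p, by omega⟩ rfl ▸ hJ _⟩
  · rintro ⟨hσ, hτ, hq⟩ k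
    rcases lt_trichotomy (k : ℕ) p with h | h | h
    · rw [hL ⟨k, h⟩ k rfl]; exact hσ _
    · rw [hM k h]; exact hq
    · rw [hR ⟨k - (p + 1), by omega⟩ k (by simp only; omega)]; exact hτ _

lemma IsGlue.avoidsRel_iff (hπ : IsGlue a b σ τ π) {R : ℕ → ℕ → ℕ → Prop}
    (hR : ∀ d x y z, R (x + d) (y + d) (z + d) ↔ R x y z)
    (hmin : ∀ x y z, R x y z → y < x ∧ y < z)
    (hcross : ∀ x y z, x < p → z < q → ¬ R (x + a) y (z + b)) :
    AvoidsRel R π ↔ AvoidsRel R σ ∧ AvoidsRel R τ := by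
  refine ⟨fun h => ⟨h.of_isShiftedFactor hR hπ.left (by omega),
    h.of_isShiftedFactor hR hπ.right le_rfl⟩, ?_⟩
  rintro ⟨hσ, hτ⟩ ⟨i, j, k, hij, hjk, hijk⟩
  rw [Fin.lt_def] at hij hjk
  have hk := k.isLt
  rcases lt_trichotomy (k : ℕ) p with hkp | hkp | hkp
  · refine hσ ⟨⟨i, by omega⟩, ⟨j, by omega⟩, ⟨k, hkp⟩, hij, hjk, ?_⟩
    rwa [hπ.left ⟨i, by omega⟩ i (by simp), hπ.left ⟨j, by omega⟩ j (by simp),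
      hπ.left ⟨k, hkp⟩ k (by simp), hR] at hijk
  · rw [hπ.mid k hkp] at hijk
    exact absurd (hmin _ _ _ hijk).2 (by omega)
  rcases lt_trichotomy (i : ℕ) p with hip | hip | hip
  · rw [hπ.left ⟨i, hip⟩ i (by simp), hπ.right ⟨k - (p + 1), by omega⟩ k (by simp; omega)] at hijk
    exact hcross _ _ _ (σ _).isLt (τ _).isLt hijk
  · rw [hπ.mid i hip] at hijk
    exact absurd (hmin _ _ _ hijk).1 (by omega)
  · refine hτ ⟨⟨i - (p + 1), by omega⟩, ⟨j - (p + 1), by omega⟩, ⟨k - (p + 1), by omega⟩,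
      by rw [Fin.lt_def]; simp only; omega, by rw [Fin.lt_def]; simp only; omega, ?_⟩
    rwa [hπ.right ⟨i - (p + 1), by omega⟩ i (by simp; omega),
      hπ.right ⟨j - (p + 1), by omega⟩ j (by simp; omega),
      hπ.right ⟨k - (p + 1), by omega⟩ k (by simp; omega), hR] at hijk

lemma IsGlue.unique (h₁ : IsGlue a b σ τ π) {π' : Perm (Fin (p + 1 + q))}
    (h₂ : IsGlue a b σ τ π') : π = π' := by
  ext k
  rcases lt_trichotomy (k : ℕ) p with h | h | h
  · rw [h₁.left ⟨k, h⟩ k (by simp), h₂.left ⟨k, h⟩ k (by simp)]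
  · rw [h₁.mid k h, h₂.mid k h]
  · rw [h₁.right ⟨k - (p + 1), by omega⟩ k (by simp; omega),
      h₂.right ⟨k - (p + 1), by omega⟩ k (by simp; omega)]

lemma IsGlue.inj {σ' : Perm (Fin p)} {τ' : Perm (Fin q)} (h₁ : IsGlue a b σ τ π)
    (h₂ : IsGlue a b σ' τ' π) : σ = σ' ∧ τ = τ' := by
  refine ⟨Equiv.ext fun i => Fin.ext ?_, Equiv.ext fun j => Fin.ext ?_⟩
  · have := h₁.left i ⟨i, by omega⟩ (by simp)
    have := h₂.left i ⟨i, by omega⟩ (by simp)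
    omega
  · have := h₁.right j ⟨p + 1 + j, by omega⟩ rfl
    have := h₂.right j ⟨p + 1 + j, by omega⟩ rfl
    omega

lemma exists_isGlue (ha : 1 ≤ a) (hb : 1 ≤ b) (haq : a ≤ q + 1) (hbp : b ≤ p + 1)
    (hdisj : a + p ≤ b ∨ b + q ≤ a) (σ : Perm (Fin p)) (τ : Perm (Fin q)) :
    ∃ π, IsGlue a b σ τ π := by
  let f (i : Fin (p + 1 + q)) : Fin (p + 1 + q) :=
    if h : (i : ℕ) < p then ⟨σ ⟨i, h⟩ + a, by have := (σ ⟨i, h⟩).isLt; omega⟩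
    else if h' : (i : ℕ) = p then ⟨0, by omega⟩
    else ⟨τ ⟨i - (p + 1), by omega⟩ + b, by have := (τ ⟨i - (p + 1), by omega⟩).isLt; omega⟩
  have hL (i : Fin p) (i' : Fin (p + 1 + q)) (h : (i' : ℕ) = 0 + i) : (f i' : ℕ) = σ i + a := by
    simp [f, show i' = ⟨i, by have := i.isLt; omega⟩ from Fin.ext (by simp; omega)]
  have hM (k : Fin (p + 1 + q)) (h : (k : ℕ) = p) : (f k : ℕ) = 0 := by simp [f, h]
  have hR (j : Fin q) (j' : Fin (p + 1 + q)) (h : (j' : ℕ) = p + 1 + j) :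
      (f j' : ℕ) = τ j + b := by
    simp [f, show ¬ (j' : ℕ) < p by omega, show (j' : ℕ) ≠ p by omega,
      show (⟨j' - (p + 1), by omega⟩ : Fin q) = j from Fin.ext (by simp; omega)]
  have hf : Function.Surjective f := by
    intro v
    have := v.isLt
    by_cases hv0 : (v : ℕ) = 0
    · exact ⟨⟨p, by omega⟩, Fin.ext (by rw [hM _ rfl]; omega)⟩
    by_cases hva : a ≤ v ∧ (v : ℕ) < a + p
    · let i := σ.symm ⟨v - a, by omega⟩
      refine ⟨⟨i, by have := i.isLt; omega⟩, Fin.ext ?_⟩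
      rw [hL i _ (by simp), apply_symm_apply]
      simp only
      omega
    · let j := τ.symm ⟨v - b, by omega⟩
      refine ⟨⟨p + 1 + j, by have := j.isLt; omega⟩, Fin.ext ?_⟩
      rw [hR j _ rfl, apply_symm_apply]
      simp only
      omega
  exact ⟨ofBijective f hf.bijective_of_finite, hL, hM, hR⟩

lemma exists_isGlue_of_bounds (h0 : (π ⟨p, by omega⟩ : ℕ) = 0)
    (hL : ∀ i : Fin (p + 1 + q), (i : ℕ) < p → a ≤ π i ∧ (π i : ℕ) < a + p)
    (hR : ∀ i : Fin (p + 1 + q), p < (i : ℕ) → b ≤ π i ∧ (π i : ℕ) < b + q) :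
    ∃ σ τ, IsGlue a b σ τ π := by
  obtain ⟨σ, hσ⟩ := exists_isShiftedFactor π (c := 0) (by omega) fun i _ h => hL i (by omega)
  obtain ⟨τ, hτ⟩ := exists_isShiftedFactor π (c := p + 1) le_rfl fun i h _ => hR i (by omega)
  exact ⟨σ, τ, hσ, fun k hk => by rwa [show k = ⟨p, by omega⟩ from Fin.ext hk], hτ⟩

lemma exists_isGlue_of_lt (h0 : (π ⟨p, by omega⟩ : ℕ) = 0)
    (hsep : ∀ i k, i < ⟨p, by omega⟩ → ⟨p, by omega⟩ < k → π i < π k) :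
    ∃ σ τ, IsGlue 1 (p + 1) σ τ π := by
  refine exists_isGlue_of_bounds h0 (fun i hi => ?_) (fun k hk => ?_)
  · have := val_apply_pos_of_ne π h0 (i := i) (Fin.ne_of_val_ne (by simp; omega))
    have := val_add_card_lt_of_forall_lt π i (S := Ioi ⟨p, by omega⟩)
      fun k hk => hsep i k (Fin.lt_def.mpr hi) (mem_Ioi.mp hk)
    simp only [Fin.card_Ioi] at this
    omega
  · have := card_le_val_of_forall_lt π k (S := Iic ⟨p, by omega⟩) fun i hi => by
      rcases (mem_Iic.mp hi).lt_or_eq with hi | rfl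
      · exact hsep i k hi (Fin.lt_def.mpr hk)
      · exact Fin.lt_def.mpr (h0 ▸ val_apply_pos_of_ne π h0 (Fin.ne_of_val_ne (by simp; omega)))
    simp only [Fin.card_Iic] at this
    exact ⟨this, by omega⟩

lemma exists_isGlue_of_gt (h0 : (π ⟨p, by omega⟩ : ℕ) = 0)
    (hsep : ∀ i k, i < ⟨p, by omega⟩ → ⟨p, by omega⟩ < k → π k < π i) :
    ∃ σ τ, IsGlue (q + 1) 1 σ τ π := by
  refine exists_isGlue_of_bounds h0 (fun i hi => ?_) (fun k hk => ?_)
  · have := card_le_val_of_forall_lt π i (S := Ici ⟨p, by omega⟩) fun k hk => by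
      rcases (mem_Ici.mp hk).lt_or_eq with hk | rfl
      · exact hsep i k (Fin.lt_def.mpr hi) hk
      · exact Fin.lt_def.mpr (h0 ▸ val_apply_pos_of_ne π h0 (Fin.ne_of_val_ne (by simp; omega)))
    simp only [Fin.card_Ici] at this
    omega
  · have := val_apply_pos_of_ne π h0 (i := k) (Fin.ne_of_val_ne (by simp; omega))
    have := val_add_card_lt_of_forall_lt π k (S := Iio ⟨p, by omega⟩)
      fun i hi => hsep i k (mem_Iio.mp hi) (Fin.lt_def.mpr hk)
    simp only [Fin.card_Iio] at this
    omega

end Glue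

section Counting

noncomputable def jacobiCount (P : ∀ {m : ℕ}, Perm (Fin m) → Prop) (m : ℕ) : ℕ :=
  Nat.card {π : Perm (Fin m) // IsJacobi π ∧ P π}

variable (P : ∀ {m : ℕ}, Perm (Fin m) → Prop)

lemma jacobiCount_zero (hP : ∀ π : Perm (Fin 0), P π) : jacobiCount P 0 = 1 := by
  rw [jacobiCount, Nat.card_congr (subtypeUnivEquiv fun π => ⟨fun k => k.elim0, hP π⟩)]
  simp

lemma card_jacobi_min_at {n p q a b : ℕ} (hn : p + 1 + q = n) (ha : 1 ≤ a)
    (hglue : ∀ (σ : Perm (Fin p)) (τ : Perm (Fin q)) (π : Perm (Fin (p + 1 + q))),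
      IsGlue a b σ τ π → (P π ↔ P σ ∧ P τ))
    (hsplit : ∀ π : Perm (Fin (p + 1 + q)), P π → (π ⟨p, by omega⟩ : ℕ) = 0 →
      ∃ σ τ, IsGlue a b σ τ π)
    (hex : ∀ (σ : Perm (Fin p)) (τ : Perm (Fin q)), ∃ π, IsGlue a b σ τ π) :
    Nat.card {π : Perm (Fin n) // (IsJacobi π ∧ P π) ∧ (π ⟨p, by omega⟩ : ℕ) = 0}
      = if Even q then jacobiCount P p * jacobiCount P q else 0 := by
  subst hn
  split_ifs with hq
  · choose g hg using hex
    rw [jacobiCount, jacobiCount, ← Nat.card_prod]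
    have hmem (σ : Perm (Fin p)) (τ : Perm (Fin q)) (hσ : IsJacobi σ ∧ P σ)
        (hτ : IsJacobi τ ∧ P τ) :
        (IsJacobi (g σ τ) ∧ P (g σ τ)) ∧ (g σ τ ⟨p, by omega⟩ : ℕ) = 0 :=
      ⟨⟨((hg σ τ).isJacobi_iff ha).mpr ⟨hσ.1, hτ.1, hq⟩, (hglue _ _ _ (hg σ τ)).mpr ⟨hσ.2, hτ.2⟩⟩,
        (hg σ τ).mid _ rfl⟩
    refine (Nat.card_eq_of_bijective (fun st => ⟨g st.1 st.2, hmem _ _ st.1.2 st.2.2⟩)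
      ⟨?_, ?_⟩).symm
    · rintro ⟨⟨σ, hσ⟩, ⟨τ, hτ⟩⟩ ⟨⟨σ', hσ'⟩, ⟨τ', hτ'⟩⟩ h
      have h' : g σ τ = g σ' τ' := congrArg Subtype.val h
      obtain ⟨rfl, rfl⟩ := (hg σ τ).inj (h' ▸ hg σ' τ')
      rfl
    · rintro ⟨π, ⟨hJ, hP⟩, h0⟩
      obtain ⟨σ, τ, hπ⟩ := hsplit π hP h0
      obtain ⟨hσJ, hτJ, -⟩ := (hπ.isJacobi_iff ha).mp hJ
      obtain ⟨hσP, hτP⟩ := (hglue _ _ _ hπ).mp hP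
      exact ⟨⟨⟨σ, hσJ, hσP⟩, ⟨τ, hτJ, hτP⟩⟩, Subtype.ext ((hg σ τ).unique hπ)⟩
  · refine @Nat.card_of_isEmpty _ ⟨fun ⟨π, ⟨hJ, _⟩, h0⟩ => hq ?_⟩
    simpa [rhoLen_of_val_eq_zero π h0] using hJ ⟨p, by omega⟩

lemma card_eq_sum_card_val_eq_zero {N : ℕ} (Q : Perm (Fin (N + 1)) → Prop) :
    Nat.card {π // Q π}
      = ∑ v : Fin (N + 1), Nat.card {π : Perm (Fin (N + 1)) // Q π ∧ (π v : ℕ) = 0} := by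
  classical
  simp only [Nat.card_eq_fintype_card, Fintype.card_subtype]
  rw [card_eq_sum_card_fiberwise (f := fun π => π.symm 0) (t := univ) (by simp)]
  refine sum_congr rfl fun v _ => ?_
  rw [filter_filter]
  congr! 3 with π
  rw [symm_apply_eq, eq_comm, Fin.ext_iff, Fin.val_zero]

lemma jacobiCount_succ
    (hcard : ∀ n p q (hn : p + 1 + q = n),
      Nat.card {π : Perm (Fin n) // (IsJacobi π ∧ P π) ∧ (π ⟨p, by omega⟩ : ℕ) = 0}
        = if Even q then jacobiCount P p * jacobiCount P q else 0) (N : ℕ) :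
    jacobiCount P (N + 1)
      = ∑ j ∈ range (N / 2 + 1), jacobiCount P (N - 2 * j) * jacobiCount P (2 * j) := by
  rw [jacobiCount, card_eq_sum_card_val_eq_zero,
    ← sum_range_ite_even N (fun p q => jacobiCount P p * jacobiCount P q),
    ← Fin.sum_univ_eq_sum_range (fun p => if Even (N - p) then _ else 0)]
  exact sum_congr rfl fun v _ => hcard _ v (N - v) (by omega)

end Counting

lemma card_jacobi_min_at_avoids312 (n p q : ℕ) (hn : p + 1 + q = n) :
    Nat.card {π : Perm (Fin n) // (IsJacobi π ∧ Avoids312 π) ∧ (π ⟨p, by omega⟩ : ℕ) = 0}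
      = if Even q then jacobiCount Avoids312 p * jacobiCount Avoids312 q else 0 :=
  card_jacobi_min_at Avoids312 hn le_rfl
    (fun _ _ _ hπ => hπ.avoidsRel_iff (R := fun x y z => y < z ∧ z < x)
      (by intros; omega) (by intros; omega) (by intros; omega))
    (fun _ hπ h0 => exists_isGlue_of_lt h0 fun _ _ hi hk => hπ.lt_of_lt_of_lt h0 hi hk)
    (exists_isGlue le_rfl (by omega) (by omega) le_rfl (by omega))

lemma card_jacobi_min_at_avoids213 (n p q : ℕ) (hn : p + 1 + q = n) :
    Nat.card {π : Perm (Fin n) // (IsJacobi π ∧ Avoids213 π) ∧ (π ⟨p, by omega⟩ : ℕ) = 0}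
      = if Even q then jacobiCount Avoids213 p * jacobiCount Avoids213 q else 0 :=
  card_jacobi_min_at Avoids213 hn (by omega)
    (fun _ _ _ hπ => hπ.avoidsRel_iff (R := fun x y z => y < x ∧ x < z)
      (by intros; omega) (by intros; omega) (by intros; omega))
    (fun _ hπ h0 => exists_isGlue_of_gt h0 fun _ _ hi hk => hπ.gt_of_lt_of_lt h0 hi hk)
    (exists_isGlue (by omega) le_rfl le_rfl (by omega) (by omega))

/-- Enumeration of 213- and 312-avoiding Jacobi permutations of `[2n]` and `[2n+1]`. -/
theorem jacobi_avoid_213_312_count (n : ℕ) :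
    (Nat.card {π : Equiv.Perm (Fin (2 * n)) // IsJacobi π ∧ Avoids213 π} : ℚ)
        = (1 / (2 * (n : ℚ) + 1)) * ((3 * n).choose n : ℕ) ∧
    (Nat.card {π : Equiv.Perm (Fin (2 * n)) // IsJacobi π ∧ Avoids312 π} : ℚ)
        = (1 / (2 * (n : ℚ) + 1)) * ((3 * n).choose n : ℕ) ∧
    (Nat.card {π : Equiv.Perm (Fin (2 * n + 1)) // IsJacobi π ∧ Avoids213 π} : ℚ)
        = (1 / (2 * (n : ℚ) + 1)) * ((3 * n + 1).choose (n + 1) : ℕ) ∧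
    (Nat.card {π : Equiv.Perm (Fin (2 * n + 1)) // IsJacobi π ∧ Avoids312 π} : ℚ)
        = (1 / (2 * (n : ℚ) + 1)) * ((3 * n + 1).choose (n + 1) : ℕ) := by
  have h213 := cast_eq_raney_of_rec _ (jacobiCount_zero Avoids213 fun _ ⟨i, _⟩ => i.elim0)
    (jacobiCount_succ Avoids213 card_jacobi_min_at_avoids213)
  have h312 := cast_eq_raney_of_rec _ (jacobiCount_zero Avoids312 fun _ ⟨i, _⟩ => i.elim0)
    (jacobiCount_succ Avoids312 card_jacobi_min_at_avoids312)
  have hodd : (2 * n + 1) / 2 = n ∧ (2 * n + 1) % 2 + 1 = 2 := by omega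
  simp only [jacobiCount] at h213 h312
  rw [← raney_one, ← raney_two]
  exact ⟨by simpa using h213 (2 * n), by simpa using h312 (2 * n),
    by simpa [hodd] using h213 (2 * n + 1), by simpa [hodd] using h312 (2 * n + 1)⟩
end

section
/- For all n ≥ 0, if π is a Jacobi permutation of [n] that avoids the pattern 213, then the inverse permutation π⁻¹ is also Jacobi. -/
/-!
In a 213-avoiding permutation, once the run `ρ_π(π_k)` is broken by a letter smaller than `π_k`,
no larger letter can follow; so `|ρ_π(π_k)|` counts all pairs `k < j` with `π_k < π_j`.
This count is invariant under `(k, π) ↦ (π_k, π⁻¹)`, and 213 is an involution, so `π⁻¹` is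
213-avoiding as well and its runs have the same lengths as those of `π`.
-/

variable {n : ℕ} {π : Equiv.Perm (Fin n)}

theorem Avoids213.inv (h : Avoids213 π) : Avoids213 π⁻¹ := by
  rintro ⟨i, j, l, hij, hjl, hji, hil⟩
  exact h ⟨π⁻¹ j, π⁻¹ i, π⁻¹ l, hji, hil, by simpa using hij, by simpa using hjl⟩

theorem rhoLen_eq_card_of_avoids213 (h : Avoids213 π) (k : Fin n) :
    rhoLen π k = Nat.card {j : Fin n // k < j ∧ π k < π j} := by
  refine Nat.card_congr (Equiv.subtypeEquivRight fun j => ⟨?_, ?_⟩)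
  · rintro ⟨hkj, hrun⟩
    exact ⟨hkj, hrun j hkj le_rfl⟩
  · rintro ⟨hkj, hkj'⟩
    refine ⟨hkj, fun i hki hij => ?_⟩
    by_contra! hik
    have hik' : π i < π k := hik.lt_of_ne (π.injective.ne hki.ne')
    have hij' : i < j := hij.lt_of_ne (by rintro rfl; exact hik'.not_gt hkj')
    exact h ⟨k, i, j, hki, hij', hik', hkj'⟩

theorem card_nonInversionsFrom_inv_apply (π : Equiv.Perm (Fin n)) (k : Fin n) :
    Nat.card {j : Fin n // π k < j ∧ π⁻¹ (π k) < π⁻¹ j} =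
      Nat.card {j : Fin n // k < j ∧ π k < π j} :=
  Nat.card_congr (π.symm.subtypeEquiv fun j => by simp [and_comm])

theorem rhoLen_inv_apply_of_avoids213 (h : Avoids213 π) (k : Fin n) :
    rhoLen π⁻¹ (π k) = rhoLen π k := by
  rw [rhoLen_eq_card_of_avoids213 h.inv, rhoLen_eq_card_of_avoids213 h,
    card_nonInversionsFrom_inv_apply]

/-- If `π` is a 213-avoiding Jacobi permutation of `[n]`, then `π⁻¹` is Jacobi. -/
theorem jacobi_avoid_213_inv_jacobi (n : ℕ) (π : Equiv.Perm (Fin n))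
    (hJ : IsJacobi π) (hav : Avoids213 π) : IsJacobi π⁻¹ := by
  intro v
  obtain ⟨k, rfl⟩ := π.surjective v
  rw [rhoLen_inv_apply_of_avoids213 hav k]
  exact hJ k
end

section
/- For all n ≥ 1, the only Jacobi permutation of [n] avoiding the pattern 132 is the decreasing permutation n(n−1)⋯21; in particular, the number of Jacobi permutations of [n] avoiding 132 equals 1 for all n ≥ 0. -/
lemma jac132_step {n : ℕ} (π : Equiv.Perm (Fin n)) (hJ : IsJacobi π) (hA : Avoids132 π)
    (k : ℕ) (hk : k + 1 < n) (asc : π ⟨k, by omega⟩ < π ⟨k+1, hk⟩) :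
    ∃ hk2 : k + 2 < n, π ⟨k+1, hk⟩ < π ⟨k+2, hk2⟩ := by
  set k0 : Fin n := ⟨k, by omega⟩ with hk0
  set T := {j : Fin n // k0 < j ∧ ∀ i : Fin n, k0 < i → i ≤ j → π k0 < π i} with hT
  have hprop : k0 < (⟨k+1, hk⟩ : Fin n) ∧
      ∀ i : Fin n, k0 < i → i ≤ ⟨k+1, hk⟩ → π k0 < π i := by
    refine ⟨by simp [hk0, Fin.lt_def], ?_⟩
    intro i hi hi2
    have hieq : i = ⟨k+1, hk⟩ := by
      apply Fin.ext
      rw [Fin.le_def] at hi2; rw [Fin.lt_def] at hi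
      simp [hk0] at hi hi2 ⊢; omega
    rw [hieq]; exact asc
  have hne : Nonempty T := ⟨⟨⟨k+1, hk⟩, hprop⟩⟩
  have hpos : 0 < Nat.card T := Nat.card_pos
  have h2 : 1 < Nat.card T := by
    rcases hJ k0 with ⟨t, ht⟩
    have : rhoLen π k0 = Nat.card T := rfl
    omega
  have hnt : Nontrivial T := by
    have : Fintype T := Fintype.ofFinite T
    rw [Nat.card_eq_fintype_card] at h2
    exact Fintype.one_lt_card_iff_nontrivial.mp h2
  obtain ⟨a, b, hab⟩ := hnt
  -- one of a, b has val ≥ k+2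
  have hmax : ∃ j : T, k + 2 ≤ (j : Fin n).val := by
    have ha := a.2.1; have hb := b.2.1
    rw [Fin.lt_def] at ha hb
    simp only [hk0] at ha hb
    have hvne : ((a : Fin n) : ℕ) ≠ ((b : Fin n) : ℕ) :=
      fun h => hab (Subtype.ext (Fin.ext h))
    rcases Nat.lt_or_ge ((a : Fin n) : ℕ) ((b : Fin n) : ℕ) with h | h
    · exact ⟨b, by omega⟩
    · exact ⟨a, by omega⟩
  obtain ⟨j, hj⟩ := hmax
  have hk2 : k + 2 < n := lt_of_le_of_lt hj (j : Fin n).isLt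
  refine ⟨hk2, ?_⟩
  have hgt : π k0 < π ⟨k+2, hk2⟩ := by
    apply j.2.2 ⟨k+2, hk2⟩
    · rw [Fin.lt_def]; simp [hk0]
    · rw [Fin.le_def]; exact hj
  -- 132 avoidance
  by_contra hlt
  push_neg at hlt
  have hne2 : π ⟨k+2, hk2⟩ ≠ π ⟨k+1, hk⟩ := by
    intro h
    have := π.injective h
    simp at this
  apply hA
  exact ⟨k0, ⟨k+1, hk⟩, ⟨k+2, hk2⟩, by rw [Fin.lt_def]; simp [hk0],
    by rw [Fin.lt_def]; simp, hgt, lt_of_le_of_ne hlt hne2⟩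

lemma jac132_no_ascent {n : ℕ} (π : Equiv.Perm (Fin n)) (hJ : IsJacobi π) (hA : Avoids132 π) :
    ∀ k : ℕ, ∀ hk : k + 1 < n, ¬ π ⟨k, by omega⟩ < π ⟨k+1, hk⟩ := by
  suffices h : ∀ d k : ℕ, n ≤ k + d → ∀ hk : k + 1 < n, ¬ π ⟨k, by omega⟩ < π ⟨k+1, hk⟩ by
    intro k hk; exact h n k (by omega) hk
  intro d
  induction d with
  | zero => intro k hd hk; omega
  | succ d ih =>
    intro k hd hk asc
    obtain ⟨hk2, asc'⟩ := jac132_step π hJ hA k hk asc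
    exact ih (k+1) (by omega) hk2 asc'

lemma jac132_strict_anti {n : ℕ} (π : Equiv.Perm (Fin n)) (hJ : IsJacobi π) (hA : Avoids132 π) :
    StrictAnti (fun i : Fin n => π i) := by
  have adj : ∀ k : ℕ, ∀ hk : k + 1 < n, π ⟨k+1, hk⟩ < π ⟨k, by omega⟩ := by
    intro k hk
    have h1 := jac132_no_ascent π hJ hA k hk
    have hne : π ⟨k+1, hk⟩ ≠ π ⟨k, by omega⟩ := by
      intro h; have := π.injective h; simp at this
    exact lt_of_le_of_ne (not_lt.mp h1) hne
  have key : ∀ m : ℕ, ∀ i : Fin n, ∀ h : i.val + m + 1 < n, π ⟨i.val + m + 1, h⟩ < π i := by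
    intro m
    induction m with
    | zero =>
      intro i h
      have h1 := adj i.val h
      simpa using h1
    | succ m ih =>
      intro i h
      have hj' : i.val + m + 1 < n := by omega
      have h1 := ih i hj'
      have h2 := adj (i.val + m + 1) h
      exact lt_trans h2 h1
  intro i j hij
  rw [Fin.lt_def] at hij
  simp only
  obtain ⟨m, hm⟩ : ∃ m, j.val = i.val + m + 1 := ⟨j.val - i.val - 1, by omega⟩
  have hlt : i.val + m + 1 < n := by have := j.isLt; omega
  have := key m i hlt
  have hje : j = ⟨i.val + m + 1, hlt⟩ := Fin.ext hm
  rw [hje]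
  exact this

lemma jac132_eq_rev {n : ℕ} (π : Equiv.Perm (Fin n)) (hJ : IsJacobi π) (hA : Avoids132 π) :
    ∀ k : Fin n, π k = k.rev := by
  have hanti := jac132_strict_anti π hJ hA
  have hmono : StrictMono (fun i : Fin n => π i.rev) := by
    intro a b hab
    exact hanti (by simpa using (Fin.rev_lt_rev.mpr hab : b.rev < a.rev))
  have hid : (fun i : Fin n => π i.rev) = id := by
    have wf : WellFoundedLT (Fin n) := inferInstance
    apply (hmono.range_inj (strictMono_id : StrictMono (id : Fin n → Fin n))).mp
    rw [Set.range_id]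
    apply Set.range_eq_univ.mpr
    intro y
    exact ⟨(π.symm y).rev, by simp⟩
  intro k
  have := congrFun hid k.rev
  simpa using this

lemma jac132_rev_jacobi (n : ℕ) : IsJacobi (Fin.revPerm : Equiv.Perm (Fin n)) := by
  intro k
  have : IsEmpty {j : Fin n // k < j ∧ ∀ i : Fin n, k < i → i ≤ j → Fin.revPerm k < Fin.revPerm i} := by
    constructor
    rintro ⟨j, hj, hall⟩
    have := hall j hj le_rfl
    simp only [Fin.revPerm_apply] at this
    exact absurd this (not_lt.mpr (Fin.rev_le_rev.mpr hj.le))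
  rw [rhoLen, Nat.card_of_isEmpty]
  exact Even.zero

lemma jac132_rev_avoids (n : ℕ) : Avoids132 (Fin.revPerm : Equiv.Perm (Fin n)) := by
  rintro ⟨i, j, k, hij, hjk, h1, h2⟩
  simp only [Fin.revPerm_apply] at h1 h2
  exact absurd h1 (not_lt.mpr (Fin.rev_le_rev.mpr (hij.trans hjk).le))

/-- For `n ≥ 1`, the only 132-avoiding Jacobi permutation of `[n]` is the decreasing
permutation `n (n-1) ⋯ 2 1`; in particular there is exactly one 132-avoiding Jacobi
permutation of `[n]` for every `n ≥ 0`. -/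
theorem jacobi_avoid_132 :
    (∀ n : ℕ, 1 ≤ n → ∀ π : Equiv.Perm (Fin n), IsJacobi π → Avoids132 π →
      ∀ k : Fin n, π k = k.rev) ∧
    (∀ n : ℕ,
      Nat.card {π : Equiv.Perm (Fin n) // IsJacobi π ∧ Avoids132 π} = 1) := by
  constructor
  · intro n _ π hJ hA; exact jac132_eq_rev π hJ hA
  · intro n
    rw [Nat.card_eq_one_iff_unique]
    constructor
    · constructor
      rintro ⟨π, hπJ, hπA⟩ ⟨σ, hσJ, hσA⟩
      apply Subtype.ext
      rcases Nat.eq_zero_or_pos n with h0 | hpos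
      · subst h0; exact Subsingleton.elim _ _
      · apply Equiv.ext
        intro k
        rw [jac132_eq_rev π hπJ hπA k, jac132_eq_rev σ hσJ hσA k]
    · exact ⟨⟨Fin.revPerm, jac132_rev_jacobi n, jac132_rev_avoids n⟩⟩
end
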